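/- arXiv:1901.08462 — 4 statements merged into one kernel-verified Lean document; each statement's English description precedes it below -/
import Mathlib

section
/- The bidual body of a convex body K reverses sign: (K^ω)^ω = −K, where K is a convex body in a symplectic plane containing the origin in its interior. -/
/-!
Skew-symmetry of `ω` gives `-K ⊆ (K^ω)^ω` directly. Conversely, if `-z ∉ K`, Hahn–Banach
separates `-z` from `K` by a functional, normalised to be `≤ 1` on `K` (possible since `0 ∈ K`);
by nondegeneracy in finite dimension this functional is `ω y` for some `y`, so `y ∈ K^ω` and
`ω z y = ω y (-z) > 1`, i.e. `z ∉ (K^ω)^ω`.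
-/

/-- The dual body of `K` with respect to a symplectic form `ω`. -/
def dualBody {X : Type*} [AddCommGroup X] [Module ℝ X]
    (ω : X →ₗ[ℝ] X →ₗ[ℝ] ℝ) (K : Set X) : Set X :=
  {x : X | ∀ y ∈ K, ω x y ≤ 1}

theorem LinearMap.SeparatingLeft.surjective {k V : Type*} [Field k] [AddCommGroup V] [Module k V]
    [FiniteDimensional k V] {B : V →ₗ[k] V →ₗ[k] k} (hB : B.SeparatingLeft) :
    Function.Surjective B :=
  (injective_iff_surjective_of_finrank_eq_finrank Subspace.dual_finrank_eq.symm).1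
    (ker_eq_bot.1 (separatingLeft_iff_ker_eq_bot.1 hB))

section DualBody

variable {X : Type*} [AddCommGroup X] [Module ℝ X] {ω : X →ₗ[ℝ] X →ₗ[ℝ] ℝ} {K : Set X}

theorem neg_subset_dualBody_dualBody (hω : ω.IsAlt) : -K ⊆ dualBody ω (dualBody ω K) :=
  fun x hx y hy => by simpa [hω.neg y x] using hy (-x) hx

variable [TopologicalSpace X] [IsTopologicalAddGroup X] [ContinuousSMul ℝ X]
  [LocallyConvexSpace ℝ X]

theorem exists_mem_dualBody_one_lt (hω : Function.Surjective ω) (hKc : IsClosed K)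
    (hKconv : Convex ℝ K) (hK0 : 0 ∈ K) {x : X} (hx : x ∉ K) :
    ∃ y ∈ dualBody ω K, 1 < ω y x := by
  obtain ⟨f, u, hfK, hfx⟩ := geometric_hahn_banach_closed_point hKconv hKc hx
  have hu : 0 < u := by simpa using hfK 0 hK0
  obtain ⟨y, hy⟩ := hω (u⁻¹ • (f : X →ₗ[ℝ] ℝ))
  have hωy : ∀ v, ω y v = f v / u := fun v => by simp [hy, div_eq_inv_mul]
  refine ⟨y, fun k hk => ?_, ?_⟩
  · rw [hωy, div_le_one hu]
    exact (hfK k hk).le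
  · rwa [hωy, one_lt_div hu]

theorem dualBody_dualBody_subset_neg (hAlt : ω.IsAlt) (hω : Function.Surjective ω)
    (hKc : IsClosed K) (hKconv : Convex ℝ K) (hK0 : 0 ∈ K) :
    dualBody ω (dualBody ω K) ⊆ -K := by
  intro z hz
  by_contra hnz
  obtain ⟨y, hy, hlt⟩ := exists_mem_dualBody_one_lt hω hKc hKconv hK0 hnz
  rw [map_neg, hAlt.neg] at hlt
  exact (hz y hy).not_gt hlt

theorem dualBody_dualBody_eq_neg (hAlt : ω.IsAlt) (hω : Function.Surjective ω)
    (hKc : IsClosed K) (hKconv : Convex ℝ K) (hK0 : 0 ∈ K) :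
    dualBody ω (dualBody ω K) = -K :=
  (dualBody_dualBody_subset_neg hAlt hω hKc hKconv hK0).antisymm
    (neg_subset_dualBody_dualBody hAlt)

end DualBody

/-- The bidual body reverses the sign of the body: `(K^ω)^ω = -K`. -/
theorem stmt_7
    {X : Type*} [NormedAddCommGroup X] [NormedSpace ℝ X]
    (hdim : Module.finrank ℝ X = 2)
    (ω : X →ₗ[ℝ] X →ₗ[ℝ] ℝ)
    (halt : ∀ x, ω x x = 0) (hnd : ∀ x, (∀ y, ω x y = 0) → x = 0)
    (K : Set X) (hKc : IsCompact K) (hKconv : Convex ℝ K) (hK0 : (0 : X) ∈ interior K) :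
    dualBody ω (dualBody ω K) = -K := by
  have : FiniteDimensional ℝ X := .of_finrank_eq_succ hdim
  exact dualBody_dualBody_eq_neg halt (LinearMap.SeparatingLeft.surjective hnd) hKc.isClosed
    hKconv (interior_subset hK0)
end

section
/- In a two-dimensional gauge space (X, γ) with symplectic form ω, if x ⊣ y and ω(y,x) > 0, then y ⊣_ω x, where ⊣_ω denotes orthogonality with respect to the dual gauge γ_ω. -/
/-!
Write `γ = gauge K` and `γ_ω` for the gauge of the dual body. The duality inequality
`ω z w ≤ γ_ω z * γ w` together with `ω x x = 0` gives `γ_ω (y + t • x) ≥ ω y x / γ x` for every `t`.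
Conversely, `x ⊣ y` says that `γ (a • x + b • y) ≥ a * γ x`; as `x, y` span the plane, this shows
that `(γ x / ω y x) • y` lies in the dual body, i.e. `γ_ω y ≤ ω y x / γ x`.
-/

open Filter Topology Set
open scoped Pointwise

/-- Birkhoff-type orthogonality for a gauge `γ`. -/
def BirkhoffOrth {X : Type*} [AddCommGroup X] [Module ℝ X]
    (γ : X → ℝ) (x y : X) : Prop :=
  ∀ t : ℝ, γ x ≤ γ (x + t • y)

section

variable {X : Type*} [AddCommGroup X] [Module ℝ X]

theorem BirkhoffOrth.gauge_mul_le_gauge {K : Set X} {x y : X}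
    (h : BirkhoffOrth (gauge K) x y) (a b : ℝ) :
    gauge K x * a ≤ gauge K (a • x + b • y) := by
  rcases le_or_gt a 0 with ha | ha
  · exact (mul_nonpos_of_nonneg_of_nonpos (gauge_nonneg x) ha).trans (gauge_nonneg _)
  · have hsplit : a • x + b • y = a • (x + (b / a) • y) := by
      rw [smul_add, smul_smul, mul_div_cancel₀ _ ha.ne']
    rw [hsplit, gauge_smul_of_nonneg ha.le, smul_eq_mul, mul_comm]
    exact mul_le_mul_of_nonneg_left (h (b / a)) ha.le

section dualBody

variable {ω : X →ₗ[ℝ] X →ₗ[ℝ] ℝ} {K : Set X} {z w : X}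

theorem exists_pos_mem_smul_dualBody (hz : BddAbove (ω z '' K)) :
    ∃ r : ℝ, 0 < r ∧ z ∈ r • dualBody ω K := by
  obtain ⟨M, hM⟩ := hz
  have hr : (0 : ℝ) < max M 1 := lt_max_of_lt_right one_pos
  refine ⟨max M 1, hr, (mem_smul_set_iff_inv_smul_mem₀ hr.ne' _ _).2 fun v hv => ?_⟩
  rw [map_smul, LinearMap.smul_apply, smul_eq_mul, inv_mul_le_one₀ hr]
  exact (hM (mem_image_of_mem _ hv)).trans (le_max_left _ _)

theorem apply_le_gauge_dualBody (hz : BddAbove (ω z '' K)) (hw : w ∈ K) :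
    ω z w ≤ gauge (dualBody ω K) z := by
  refine le_csInf (exists_pos_mem_smul_dualBody hz) ?_
  rintro r ⟨hr, u, hu, rfl⟩
  simpa only [map_smul, LinearMap.smul_apply, smul_eq_mul, mul_one] using
    mul_le_mul_of_nonneg_left (hu w hw) hr.le

theorem apply_le_gauge_dualBody_mul_gauge (hz : BddAbove (ω z '' K)) (hK : Absorbent ℝ K)
    (w : X) : ω z w ≤ gauge (dualBody ω K) z * gauge K w := by
  have hlim : Tendsto (fun s => gauge (dualBody ω K) z * s) (𝓝[>] gauge K w)
      (𝓝 (gauge (dualBody ω K) z * gauge K w)) :=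
    ((continuous_const_mul _).tendsto _).mono_left nhdsWithin_le_nhds
  refine ge_of_tendsto hlim (eventually_nhdsWithin_of_forall fun s hs => ?_)
  obtain ⟨b, hb, hbs, v, hv, rfl⟩ := exists_lt_of_gauge_lt hK hs
  calc ω z (b • v) = b * ω z v := by rw [map_smul, smul_eq_mul]
    _ ≤ b * gauge (dualBody ω K) z := mul_le_mul_of_nonneg_left (apply_le_gauge_dualBody hz hv) hb.le
    _ ≤ s * gauge (dualBody ω K) z := mul_le_mul_of_nonneg_right hbs.le (gauge_nonneg z)
    _ = gauge (dualBody ω K) z * s := mul_comm _ _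

end dualBody

theorem linearIndependent_pair_of_apply_ne_zero {ω : X →ₗ[ℝ] X →ₗ[ℝ] ℝ}
    (halt : ∀ x, ω x x = 0) {x y : X} (h : ω y x ≠ 0) : LinearIndependent ℝ ![x, y] := by
  rw [LinearIndependent.pair_iff]
  intro s t hst
  have hs : s * ω y x = 0 := by simpa [halt] using congrArg (ω y) hst
  obtain rfl : s = 0 := (mul_eq_zero.1 hs).resolve_right h
  have hy : y ≠ 0 := by rintro rfl; simp at h
  simp only [zero_smul, zero_add, smul_eq_zero] at hst
  exact ⟨rfl, hst.resolve_right hy⟩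

theorem exists_smul_add_smul_eq_of_finrank_eq_two [FiniteDimensional ℝ X] {x y : X}
    (hdim : Module.finrank ℝ X = 2) (hxy : LinearIndependent ℝ ![x, y]) (z : X) :
    ∃ a b : ℝ, a • x + b • y = z := by
  have htop : Submodule.span ℝ (range ![x, y]) = ⊤ :=
    hxy.span_eq_top_of_card_eq_finrank (by simp [hdim])
  rw [Matrix.range_cons, Matrix.range_cons, Matrix.range_empty, union_empty,
    singleton_union] at htop
  exact Submodule.mem_span_pair.1 (htop ▸ Submodule.mem_top)

theorem smul_mem_dualBody_of_birkhoffOrth [FiniteDimensional ℝ X]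
    (hdim : Module.finrank ℝ X = 2) {ω : X →ₗ[ℝ] X →ₗ[ℝ] ℝ} (halt : ∀ x, ω x x = 0)
    {K : Set X} {x y : X} (hxy : BirkhoffOrth (gauge K) x y) (hpos : 0 < ω y x) :
    (gauge K x / ω y x) • y ∈ dualBody ω K := by
  intro w hw
  obtain ⟨a, b, rfl⟩ := exists_smul_add_smul_eq_of_finrank_eq_two hdim
    (linearIndependent_pair_of_apply_ne_zero halt hpos.ne') w
  have hval : ω ((gauge K x / ω y x) • y) (a • x + b • y) = gauge K x * a := by
    simp only [map_smul, map_add, LinearMap.smul_apply, halt, smul_eq_mul, mul_zero, add_zero]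
    field_simp
  exact hval ▸ (hxy.gauge_mul_le_gauge a b).trans (gauge_le_one_of_mem hw)

end

theorem stmt_9_general
    {X : Type*} [NormedAddCommGroup X] [NormedSpace ℝ X]
    (hdim : Module.finrank ℝ X = 2)
    (ω : X →ₗ[ℝ] X →ₗ[ℝ] ℝ)
    (halt : ∀ x, ω x x = 0)
    (K : Set X) (hKc : IsCompact K) (hK0 : (0 : X) ∈ interior K)
    (x y : X) (hxy : BirkhoffOrth (gauge K) x y) (hpos : 0 < ω y x) :
    BirkhoffOrth (gauge (dualBody ω K)) y x := by
  have : FiniteDimensional ℝ X := Module.finite_of_finrank_eq_succ hdim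
  have hK : Absorbent ℝ K := absorbent_nhds_zero (mem_interior_iff_mem_nhds.1 hK0)
  have hbdd : ∀ z, BddAbove (ω z '' K) := fun z =>
    (hKc.image (ω z).continuous_of_finiteDimensional).bddAbove
  have hx : 0 < gauge K x := by
    refine (gauge_pos hK (NormedSpace.isVonNBounded_of_isBounded _ hKc.isBounded)).2 ?_
    rintro rfl
    simp at hpos
  have hup : gauge K x / ω y x * gauge (dualBody ω K) y ≤ 1 := by
    simpa only [gauge_smul_of_nonneg (div_pos hx hpos).le, smul_eq_mul] using
      gauge_le_one_of_mem (smul_mem_dualBody_of_birkhoffOrth hdim halt hxy hpos)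
  intro t
  calc gauge (dualBody ω K) y ≤ ω y x / gauge K x := by
        rwa [div_mul_eq_mul_div, div_le_one hpos, mul_comm, ← le_div_iff₀ hx] at hup
    _ = ω (y + t • x) x / gauge K x := by simp [halt]
    _ ≤ gauge (dualBody ω K) (y + t • x) :=
        div_le_of_le_mul₀ hx.le (gauge_nonneg _) (apply_le_gauge_dualBody_mul_gauge (hbdd _) hK x)

/-- If `x ⊣ y` and `ω(y,x) > 0`, then `y ⊣_ω x` in the dual gauge. -/
theorem stmt_9
    {X : Type*} [NormedAddCommGroup X] [NormedSpace ℝ X]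
    (hdim : Module.finrank ℝ X = 2)
    (ω : X →ₗ[ℝ] X →ₗ[ℝ] ℝ)
    (halt : ∀ x, ω x x = 0) (hnd : ∀ x, (∀ y, ω x y = 0) → x = 0)
    (K : Set X) (hKc : IsCompact K) (hKconv : Convex ℝ K) (hK0 : (0 : X) ∈ interior K)
    (x y : X) (hxy : BirkhoffOrth (gauge K) x y) (hpos : 0 < ω y x) :
    BirkhoffOrth (gauge (dualBody ω K)) y x :=
  stmt_9_general hdim ω halt K hKc hK0 x y hxy hpos
end

section
/- Let K be a smooth convex body in the plane containing the origin in its interior. Then there exist nonzero vectors x, y such that both x ⊣ y and −x ⊣ y, where ⊣ is the Birkhoff-type orthogonality of the gauge with unit disk K. Equivalently, some chord of K through the origin joins two boundary points at which K has parallel supporting lines. -/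
/-- The line through `p` with direction `v` supports `K`. -/
def SupportsAt {X : Type*} [AddCommGroup X] [Module ℝ X]
    (K : Set X) (p v : X) : Prop :=
  ∃ f : X →ₗ[ℝ] ℝ, f ≠ 0 ∧ f v = 0 ∧ ∀ z ∈ K, f z ≤ f p

/-- `K` is a smooth convex body: exactly one supporting line at each boundary point. -/
def SmoothBody {X : Type*} [NormedAddCommGroup X] [NormedSpace ℝ X]
    (K : Set X) : Prop :=
  ∀ p ∈ frontier K, ∀ v w : X, v ≠ 0 → w ≠ 0 →
    SupportsAt K p v → SupportsAt K p w → ∃ c : ℝ, w = c • v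

/-!
Choose `p` on the unit sphere `gauge K p = 1` minimising `λ := gauge K (-p)`; by homogeneity
`λ * gauge K x ≤ gauge K (-x)` for every `x`. A supporting line of `K` at `p`, with direction `v`,
gives `p ⊣ v`. Then `gauge K (-p + t • v) ≥ λ * gauge K (p - t • v) ≥ λ = gauge K (-p)`,
so `-p ⊣ v` as well.
-/

section Gauge

variable {X : Type*} [NormedAddCommGroup X] [NormedSpace ℝ X] {K : Set X}

lemma gauge_pos_of_isBounded (hK : Bornology.IsBounded K) (hK0 : (0 : X) ∈ interior K)
    {x : X} (hx : x ≠ 0) : 0 < gauge K x :=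
  (gauge_pos (absorbent_nhds_zero (mem_interior_iff_mem_nhds.mp hK0))
    (NormedSpace.isVonNBounded_of_isBounded ℝ hK)).mpr hx

lemma gauge_inv_gauge_smul_self (hK : Bornology.IsBounded K) (hK0 : (0 : X) ∈ interior K)
    {x : X} (hx : x ≠ 0) : gauge K ((gauge K x)⁻¹ • x) = 1 := by
  have hpos := gauge_pos_of_isBounded hK hK0 hx
  rw [gauge_smul_of_nonneg (inv_nonneg.mpr hpos.le), smul_eq_mul, inv_mul_cancel₀ hpos.ne']

lemma exists_gauge_eq_one_forall_mul_le_gauge_neg [Nontrivial X] (hKc : IsCompact K)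
    (hKconv : Convex ℝ K) (hK0 : (0 : X) ∈ interior K) :
    ∃ p : X, gauge K p = 1 ∧ ∀ x : X, gauge K (-p) * gauge K x ≤ gauge K (-x) := by
  have hKn : K ∈ nhds (0 : X) := mem_interior_iff_mem_nhds.mp hK0
  have hcont : Continuous (gauge K) := continuous_gauge hKconv hKn
  set S : Set X := gauge K ⁻¹' {1}
  have hSK : S ⊆ K := fun x hx => by
    simpa [hKc.isClosed.closure_eq] using
      (gauge_le_one_iff_mem_closure hKconv hKn).mp (le_of_eq hx)
  have hS : IsCompact S := hKc.of_isClosed_subset (isClosed_singleton.preimage hcont) hSK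
  obtain ⟨x₀, hx₀⟩ := exists_ne (0 : X)
  obtain ⟨p, hpS, hpmin⟩ := hS.exists_isMinOn
    ⟨_, gauge_inv_gauge_smul_self hKc.isBounded hK0 hx₀⟩ (hcont.comp continuous_neg).continuousOn
  refine ⟨p, hpS, fun x => ?_⟩
  rcases eq_or_ne x 0 with rfl | hx
  · simp
  have hpos := gauge_pos_of_isBounded hKc.isBounded hK0 hx
  have hmin : gauge K (-p) ≤ (gauge K x)⁻¹ * gauge K (-x) := by
    have : gauge K (-p) ≤ gauge K (-((gauge K x)⁻¹ • x)) :=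
      hpmin (gauge_inv_gauge_smul_self hKc.isBounded hK0 hx)
    rwa [← smul_neg, gauge_smul_of_nonneg (inv_nonneg.mpr hpos.le), smul_eq_mul] at this
  calc gauge K (-p) * gauge K x ≤ (gauge K x)⁻¹ * gauge K (-x) * gauge K x := by gcongr
    _ = gauge K (-x) := by field_simp

lemma exists_ne_zero_birkhoffOrth (hdim : 1 < Module.finrank ℝ X) (hKconv : Convex ℝ K)
    (hK0 : (0 : X) ∈ interior K) {p : X} (hp : gauge K p = 1) :
    ∃ v : X, v ≠ 0 ∧ BirkhoffOrth (gauge K) p v := by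
  have : FiniteDimensional ℝ X := Module.finite_of_finrank_pos (by omega)
  have hKn : K ∈ nhds (0 : X) := mem_interior_iff_mem_nhds.mp hK0
  have hp' : p ∉ interior K := by
    rw [← gauge_lt_one_iff_mem_interior hKconv hKn, hp]
    exact lt_irrefl 1
  obtain ⟨f, hfp, hf⟩ := separate_convex_open_set hK0 hKconv.interior isOpen_interior hp'
  have hker : LinearMap.ker (f : X →ₗ[ℝ] ℝ) ≠ ⊥ :=
    LinearMap.ker_ne_bot_of_finrank_lt (by rwa [Module.finrank_self])
  obtain ⟨v, hv, hv0⟩ := Submodule.exists_mem_ne_zero_of_ne_bot hker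
  have hfv : f v = 0 := hv
  refine ⟨v, hv0, fun t => ?_⟩
  rw [hp]
  by_contra! h
  have := hf _ ((gauge_lt_one_iff_mem_interior hKconv hKn).mp h)
  rw [map_add, map_smul, hfv, hfp] at this
  simp at this

end Gauge

theorem stmt_13_general
    {X : Type*} [NormedAddCommGroup X] [NormedSpace ℝ X]
    (hdim : Module.finrank ℝ X = 2)
    (K : Set X) (hKc : IsCompact K) (hKconv : Convex ℝ K) (hK0 : (0 : X) ∈ interior K) :
    ∃ x y : X, x ≠ 0 ∧ y ≠ 0 ∧
      BirkhoffOrth (gauge K) x y ∧ BirkhoffOrth (gauge K) (-x) y := by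
  have : Nontrivial X := Module.nontrivial_of_finrank_pos (R := ℝ) (by omega)
  obtain ⟨p, hp, hmin⟩ := exists_gauge_eq_one_forall_mul_le_gauge_neg hKc hKconv hK0
  obtain ⟨v, hv, hpv⟩ := exists_ne_zero_birkhoffOrth (by omega) hKconv hK0 hp
  have hp0 : p ≠ 0 := by
    rintro rfl
    simp at hp
  refine ⟨p, v, hp0, hv, hpv, fun t => ?_⟩
  calc gauge K (-p) = gauge K (-p) * gauge K p := by rw [hp, mul_one]
    _ ≤ gauge K (-p) * gauge K (p + (-t) • v) :=
        mul_le_mul_of_nonneg_left (hpv (-t)) (gauge_nonneg _)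
    _ ≤ gauge K (-(p + (-t) • v)) := hmin _
    _ = gauge K (-p + t • v) := by congr 1; module

/-- In a smooth gauge plane there exist nonzero vectors `x, y` with
`x ⊣ y` and `-x ⊣ y`. -/
theorem stmt_13
    {X : Type*} [NormedAddCommGroup X] [NormedSpace ℝ X]
    (hdim : Module.finrank ℝ X = 2)
    (K : Set X) (hKc : IsCompact K) (hKconv : Convex ℝ K) (hK0 : (0 : X) ∈ interior K)
    (hsm : SmoothBody K) :
    ∃ x y : X, x ≠ 0 ∧ y ≠ 0 ∧
      BirkhoffOrth (gauge K) x y ∧ BirkhoffOrth (gauge K) (-x) y :=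
  stmt_13_general hdim K hKc hKconv hK0
end

section
/- Let (X, γ, ω) be a smooth gauge plane with unit disk K and dual gauge γ_ω, and suppose K_n → K in the Hausdorff metric with each K_n smooth and containing the origin in its interior. If x_n ∈ ∂K_n with x_n → x ∈ ∂K, and y_n is the unique vector with x_n ⊣_n y_n and ω(x_n, y_n) = 1 (orthogonality of the gauge with unit disk K_n), and y is the unique vector with x ⊣ y and ω(x,y) = 1, then y_n → y. -/
/-!
Gauges of Hausdorff-close convex bodies with a common inner ball are close on compact sets, since
each body lies in a slight dilate of the other; hence a limit of orthogonal pairs `xₙ ⊣ₙ vₙ` is an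
orthogonal pair `x ⊣ v`. Rescaling `yₙ` by `(1 + ‖yₙ‖)⁻¹` puts it in the unit ball, and along a
convergent subsequence the limit `v` satisfies `x ⊣ v` and `‖v‖ + ω(x, v) = 1`. As the gauge of `K`
is `1` at `x`, orthogonality rules out `v ∈ ℝx`, so in the plane `ω(x, v) ≠ 0`; thus `yₙ` converges
along the subsequence to `v / ω(x, v)`, which is `y` because smoothness of `K` makes the normalized
orthogonal vector unique.
-/

open Filter Topology

open Metric Pointwise

theorem subset_add_closedBall_hausdorffDist {E : Type*} [SeminormedAddCommGroup E] {s t : Set E}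
    (hs : s.Nonempty) (hs' : Bornology.IsBounded s) (ht : IsCompact t) (ht' : t.Nonempty) :
    s ⊆ t + closedBall 0 (hausdorffDist s t) := by
  have hfin : hausdorffEDist s t ≠ ⊤ :=
    hausdorffEDist_ne_top_of_nonempty_of_bounded hs ht' hs' ht.isBounded
  rw [ht.add_closedBall_zero hausdorffDist_nonneg]
  intro a ha
  rw [mem_cthickening_iff, hausdorffDist, ENNReal.ofReal_toReal hfin]
  exact infEDist_le_hausdorffEDist_of_mem ha

section Approximation

variable {X : Type*} [NormedAddCommGroup X] [NormedSpace ℝ X]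

theorem Convex.add_closedBall_subset_smul {K : Set X} {r δ : ℝ} (hK : Convex ℝ K)
    (hr : 0 < r) (hδ : 0 ≤ δ) (hrK : closedBall (0 : X) r ⊆ K) :
    K + closedBall 0 δ ⊆ (1 + δ / r) • K := by
  have hball : closedBall (0 : X) δ = (δ / r) • closedBall 0 r := by
    rw [smul_closedBall _ _ hr.le, smul_zero, Real.norm_of_nonneg (by positivity),
      div_mul_cancel₀ _ hr.ne']
  rw [hK.add_smul zero_le_one (by positivity), one_smul, hball]
  exact Set.add_subset_add_left (Set.smul_set_mono hrK)

theorem gauge_le_mul_gauge_of_subset_add_closedBall {A K : Set X} {r δ : ℝ} (hK : Convex ℝ K)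
    (hr : 0 < r) (hδ : 0 ≤ δ) (hrK : closedBall (0 : X) r ⊆ K) (hA : Absorbent ℝ A)
    (hAK : A ⊆ K + closedBall 0 δ) (z : X) :
    gauge K z ≤ (1 + δ / r) * gauge A z := by
  have hc : 0 < 1 + δ / r := by positivity
  have h := gauge_mono hA (hAK.trans (hK.add_closedBall_subset_smul hr hδ hrK)) z
  rwa [gauge_smul_left_of_nonneg hc.le, Pi.smul_apply, smul_eq_mul, inv_mul_le_iff₀ hc] at h

theorem closedBall_sub_subset_of_closedBall_subset_add {C : Set X} {r δ : ℝ}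
    (hC : Convex ℝ C) (hCcl : IsClosed C) (hr : 0 < r)
    (hrC : closedBall (0 : X) r ⊆ C + closedBall 0 δ) :
    closedBall (0 : X) (r - δ) ⊆ C := by
  intro z hz
  by_contra hzC
  obtain ⟨f, u, hfC, hfz⟩ := geometric_hahn_banach_closed_point hC hCcl hzC
  -- `r ‖f‖ = sup_{B_r} f ≤ sup_C f + δ ‖f‖`, whereas `f z ≤ (r - δ) ‖f‖`.
  have hbd : ∀ a ∈ closedBall (0 : X) r, f a ≤ u + ‖f‖ * δ := by
    intro a ha
    obtain ⟨c, hc, e, he, rfl⟩ := hrC ha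
    have hfe : f e ≤ ‖f‖ * δ := (le_abs_self _).trans <| (f.le_opNorm e).trans <|
      mul_le_mul_of_nonneg_left (by simpa using he) (norm_nonneg f)
    rw [map_add]
    linarith [hfC c hc]
  have hnorm : ‖f‖ ≤ (u + ‖f‖ * δ) / r := by
    refine f.opNorm_bound_of_ball_bound hr _ fun a ha => abs_le.2 ⟨?_, hbd a ha⟩
    have := hbd (-a) (by simpa using ha)
    rw [map_neg] at this
    linarith
  have hfz' : f z ≤ ‖f‖ * (r - δ) := (le_abs_self _).trans <| (f.le_opNorm z).trans <|
      mul_le_mul_of_nonneg_left (by simpa using hz) (norm_nonneg f)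
  rw [le_div_iff₀ hr] at hnorm
  linarith

end Approximation

section Convergence

variable {X : Type*} [NormedAddCommGroup X] [NormedSpace ℝ X] {ι : Type*} {l : Filter ι}
  {K : Set X} {Ki : ι → Set X} {δ : ι → ℝ} {r : ℝ}

theorem eventually_closedBall_subset_of_subset_add_closedBall
    (hKiconv : ∀ i, Convex ℝ (Ki i)) (hKicl : ∀ i, IsClosed (Ki i)) (hr : 0 < r)
    (hrK : closedBall (0 : X) r ⊆ K) (happ : ∀ i, K ⊆ Ki i + closedBall 0 (δ i))
    (hδ : Tendsto δ l (𝓝 0)) :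
    ∀ᶠ i in l, closedBall (0 : X) (r / 2) ⊆ Ki i := by
  filter_upwards [hδ.eventually_le_const (half_pos hr)] with i hi
  exact (closedBall_subset_closedBall (by linarith)).trans
    (closedBall_sub_subset_of_closedBall_subset_add (hKiconv i) (hKicl i) hr
      (hrK.trans (happ i)))

theorem tendsto_gauge_of_subset_add_closedBall (hKconv : Convex ℝ K)
    (hKiconv : ∀ i, Convex ℝ (Ki i)) (hr : 0 < r) (hrK : closedBall (0 : X) r ⊆ K)
    (hrKi : ∀ᶠ i in l, closedBall (0 : X) (r / 2) ⊆ Ki i)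
    (happ₁ : ∀ i, Ki i ⊆ K + closedBall 0 (δ i)) (happ₂ : ∀ i, K ⊆ Ki i + closedBall 0 (δ i))
    (hδ₀ : ∀ i, 0 ≤ δ i) (hδ : Tendsto δ l (𝓝 0)) (z : X) :
    Tendsto (fun i => gauge (Ki i) z) l (𝓝 (gauge K z)) := by
  have hKabs : Absorbent ℝ K := (absorbent_ball_zero hr).mono (ball_subset_closedBall.trans hrK)
  have hlower : Tendsto (fun i => gauge K z / (1 + δ i / r)) l (𝓝 (gauge K z)) := by
    simpa [Pi.div_def] using tendsto_const_nhds.div ((hδ.div_const r).const_add 1) (by simp)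
  have hupper : Tendsto (fun i => (1 + δ i / (r / 2)) * gauge K z) l (𝓝 (gauge K z)) := by
    simpa using ((hδ.div_const (r / 2)).const_add 1).mul_const (gauge K z)
  refine tendsto_of_tendsto_of_tendsto_of_le_of_le' hlower hupper ?_
    (hrKi.mono fun i hi => gauge_le_mul_gauge_of_subset_add_closedBall (hKiconv i)
      (half_pos hr) (hδ₀ i) hi hKabs (happ₂ i) z)
  filter_upwards [hrKi] with i hi
  have hKiabs : Absorbent ℝ (Ki i) :=
    (absorbent_ball_zero (half_pos hr)).mono (ball_subset_closedBall.trans hi)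
  rw [div_le_iff₀' (by have := hδ₀ i; positivity)]
  exact gauge_le_mul_gauge_of_subset_add_closedBall hKconv hr (hδ₀ i) hrK hKiabs (happ₁ i) z

theorem tendsto_gauge_of_tendsto_hausdorffDist (hKc : IsCompact K) (hKconv : Convex ℝ K)
    (hK0 : (0 : X) ∈ interior K) (hKic : ∀ i, IsCompact (Ki i))
    (hKiconv : ∀ i, Convex ℝ (Ki i)) (hKine : ∀ i, (Ki i).Nonempty)
    (hH : Tendsto (fun i => hausdorffDist (Ki i) K) l (𝓝 0))
    {z : ι → X} {z₀ : X} (hz : Tendsto z l (𝓝 z₀)) :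
    Tendsto (fun i => gauge (Ki i) (z i)) l (𝓝 (gauge K z₀)) := by
  obtain ⟨r, hr, hrK⟩ := nhds_basis_closedBall.mem_iff.1 (mem_interior_iff_mem_nhds.1 hK0)
  have hKne : K.Nonempty := ⟨0, interior_subset hK0⟩
  have happ₁ : ∀ i, Ki i ⊆ K + closedBall 0 (hausdorffDist (Ki i) K) := fun i =>
    subset_add_closedBall_hausdorffDist (hKine i) (hKic i).isBounded hKc hKne
  have happ₂ : ∀ i, K ⊆ Ki i + closedBall 0 (hausdorffDist (Ki i) K) := fun i => by
    rw [hausdorffDist_comm]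
    exact subset_add_closedBall_hausdorffDist hKne hKc.isBounded (hKic i) (hKine i)
  have hrKi := eventually_closedBall_subset_of_subset_add_closedBall hKiconv
    (fun i => (hKic i).isClosed) hr hrK happ₂ hH
  have hpt := tendsto_gauge_of_subset_add_closedBall hKconv hKiconv hr hrK hrKi happ₁ happ₂
    (fun _ => hausdorffDist_nonneg) hH z₀
  have hdiff : Tendsto (fun i => gauge (Ki i) (z i) - gauge (Ki i) z₀) l (𝓝 0) := by
    have hlip : ∀ᶠ i in l, ‖gauge (Ki i) (z i) - gauge (Ki i) z₀‖ ≤ 2 / r * dist (z i) z₀ := by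
      filter_upwards [hrKi] with i hi
      have hL : LipschitzWith (⟨r / 2, (half_pos hr).le⟩ : NNReal)⁻¹ (gauge (Ki i)) :=
        (hKiconv i).lipschitzWith_gauge (half_pos hr) (ball_subset_closedBall.trans hi)
      have := hL.dist_le_mul (z i) z₀
      change _ ≤ (r / 2)⁻¹ * _ at this
      rwa [inv_div, dist_eq_norm] at this
    refine squeeze_zero_norm' hlip ?_
    simpa using (tendsto_iff_dist_tendsto_zero.1 hz).const_mul (2 / r)
  simpa using hdiff.add hpt

end Convergence

namespace BirkhoffOrth

theorem smul_right {X : Type*} [AddCommGroup X] [Module ℝ X] {γ : X → ℝ} {x y : X}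
    (h : BirkhoffOrth γ x y) (c : ℝ) : BirkhoffOrth γ x (c • y) := fun t => by
  simpa [smul_smul] using h (t * c)

theorem eq_zero_of_smul_self {X : Type*} [AddCommGroup X] [Module ℝ X] {γ : X → ℝ} {x : X}
    {c : ℝ} (h : BirkhoffOrth γ x (c • x)) (hx : γ 0 < γ x) : c = 0 := by
  by_contra hc
  have := h (-c⁻¹)
  rw [smul_smul, neg_mul, inv_mul_cancel₀ hc, neg_one_smul, add_neg_cancel] at this
  linarith

theorem of_tendsto {X : Type*} [AddCommGroup X] [Module ℝ X] [TopologicalSpace X]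
    [ContinuousAdd X] [ContinuousSMul ℝ X] {ι : Type*} {l : Filter ι} [l.NeBot]
    {γ : ι → X → ℝ} {γ₀ : X → ℝ}
    (hγ : ∀ (z : ι → X) (z₀ : X), Tendsto z l (𝓝 z₀) →
      Tendsto (fun i => γ i (z i)) l (𝓝 (γ₀ z₀)))
    {x y : ι → X} {x₀ y₀ : X} (hx : Tendsto x l (𝓝 x₀)) (hy : Tendsto y l (𝓝 y₀))
    (h : ∀ i, BirkhoffOrth (γ i) (x i) (y i)) : BirkhoffOrth γ₀ x₀ y₀ := fun t =>
  le_of_tendsto_of_tendsto' (hγ x x₀ hx) (hγ _ _ (hx.add (hy.const_smul t))) fun i => h i t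

theorem supportsAt {X : Type*} [NormedAddCommGroup X] [NormedSpace ℝ X] {K : Set X}
    (hKconv : Convex ℝ K) (hK0 : (0 : X) ∈ interior K) {p v : X} (hp : p ∈ frontier K)
    (h : BirkhoffOrth (gauge K) p v) : SupportsAt K p v := by
  have hgp : gauge K p = 1 :=
    (gauge_eq_one_iff_mem_frontier hKconv (mem_interior_iff_mem_nhds.1 hK0)).2 hp
  have hline : ∀ w ∈ p +ᵥ (ℝ ∙ v : Set X), ∃ t : ℝ, w = p + t • v := by
    rintro _ ⟨s, hs, rfl⟩
    obtain ⟨t, rfl⟩ := Submodule.mem_span_singleton.1 hs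
    exact ⟨t, rfl⟩
  have hmem : ∀ t : ℝ, p + t • v ∈ p +ᵥ (ℝ ∙ v : Set X) := fun t =>
    Set.vadd_mem_vadd_set (Submodule.smul_mem _ t (Submodule.mem_span_singleton_self v))
  have hdisj : Disjoint (interior K) (p +ᵥ (ℝ ∙ v : Set X)) := by
    refine Set.disjoint_left.2 fun w hw hwL => ?_
    obtain ⟨t, rfl⟩ := hline w hwL
    have hlt : gauge K (p + t • v) < 1 := interior_subset_gauge_lt_one K hw
    linarith [h t]
  obtain ⟨f, u, hf0, hfK, hfL⟩ := geometric_hahn_banach_of_nonempty_interior hKconv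
    ((Submodule.convex _).vadd p) hdisj ⟨0, hK0⟩ ⟨p, by simpa using hmem 0⟩
  have hfv : f v = 0 := by
    by_contra hfv
    have := hfL _ (hmem ((u - 1 - f p) / f v))
    rw [map_add, map_smul, smul_eq_mul, div_mul_cancel₀ _ hfv] at this
    linarith
  refine ⟨f, fun hf => hf0 (ContinuousLinearMap.coe_injective hf), hfv, fun z hz =>
    (hfK z hz).trans (by simpa using hfL p (by simpa using hmem 0))⟩

end BirkhoffOrth

theorem eq_smul_of_apply_eq_zero {𝕜 V : Type*} [Field 𝕜] [AddCommGroup V] [Module 𝕜 V]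
    (hdim : Module.finrank 𝕜 V = 2) (ω : V →ₗ[𝕜] V →ₗ[𝕜] 𝕜) (halt : ∀ x, ω x x = 0)
    (hnd : ∀ x, (∀ y, ω x y = 0) → x = 0) {x v : V} (hx : x ≠ 0) (hv : ω x v = 0) :
    ∃ c : 𝕜, v = c • x := by
  by_contra hc
  have hli : LinearIndependent 𝕜 ![x, v] :=
    (LinearIndependent.pair_iff' hx).2 fun a ha => hc ⟨a, ha.symm⟩
  have hspan := hli.span_eq_top_of_card_eq_finrank (by simp [hdim])
  refine hx (hnd x fun w => ?_)
  have hw : w ∈ Submodule.span 𝕜 (Set.range ![x, v]) := hspan ▸ Submodule.mem_top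
  rw [Matrix.range_cons_cons_empty, Submodule.mem_span_pair] at hw
  obtain ⟨a, b, rfl⟩ := hw
  simp [halt, hv]

section SmoothGaugePlane

variable {X : Type*} [NormedAddCommGroup X] [NormedSpace ℝ X] {K : Set X}

theorem apply_ne_zero_of_birkhoffOrth (hdim : Module.finrank ℝ X = 2)
    (ω : X →ₗ[ℝ] X →ₗ[ℝ] ℝ) (halt : ∀ x, ω x x = 0) (hnd : ∀ x, (∀ y, ω x y = 0) → x = 0)
    (hKconv : Convex ℝ K) (hK0 : (0 : X) ∈ interior K) {x w : X} (hx : x ∈ frontier K)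
    (h : BirkhoffOrth (gauge K) x w) (hw : w ≠ 0) : ω x w ≠ 0 := by
  intro hxw
  have hgx : gauge K x = 1 :=
    (gauge_eq_one_iff_mem_frontier hKconv (mem_interior_iff_mem_nhds.1 hK0)).2 hx
  have hx0 : x ≠ 0 := by rintro rfl; simp at hgx
  obtain ⟨c, rfl⟩ := eq_smul_of_apply_eq_zero hdim ω halt hnd hx0 hxw
  have hc : c = 0 := h.eq_zero_of_smul_self (by simp [hgx])
  exact hw (by simp [hc])

theorem SmoothBody.eq_of_birkhoffOrth (hKsm : SmoothBody K) (ω : X →ₗ[ℝ] X →ₗ[ℝ] ℝ)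
    (hKconv : Convex ℝ K) (hK0 : (0 : X) ∈ interior K) {x y y' : X} (hx : x ∈ frontier K)
    (hy : BirkhoffOrth (gauge K) x y) (hωy : ω x y = 1)
    (hy' : BirkhoffOrth (gauge K) x y') (hωy' : ω x y' = 1) : y = y' := by
  have hy0 : y ≠ 0 := by rintro rfl; simp at hωy
  have hy0' : y' ≠ 0 := by rintro rfl; simp at hωy'
  obtain ⟨c, rfl⟩ := hKsm x hx y y' hy0 hy0' (hy.supportsAt hKconv hK0 hx)
    (hy'.supportsAt hKconv hK0 hx)
  rw [map_smul, smul_eq_mul, hωy, mul_one] at hωy'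
  rw [hωy', one_smul]

end SmoothGaugePlane

theorem norm_inv_one_add_norm_smul_add_inv {E : Type*} [SeminormedAddCommGroup E]
    [NormedSpace ℝ E] (v : E) : ‖(1 + ‖v‖)⁻¹ • v‖ + (1 + ‖v‖)⁻¹ = 1 := by
  have : 0 < 1 + ‖v‖ := by positivity
  rw [norm_smul, Real.norm_of_nonneg (inv_nonneg.2 this.le)]
  field_simp
  ring

theorem stmt_19_general
    {X : Type*} [NormedAddCommGroup X] [NormedSpace ℝ X]
    (hdim : Module.finrank ℝ X = 2)
    (ω : X →ₗ[ℝ] X →ₗ[ℝ] ℝ)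
    (halt : ∀ x, ω x x = 0) (hnd : ∀ x, (∀ y, ω x y = 0) → x = 0)
    (K : Set X) (hKc : IsCompact K) (hKconv : Convex ℝ K)
    (hK0 : (0 : X) ∈ interior K) (hKsm : SmoothBody K)
    (Kn : ℕ → Set X)
    (hKnc : ∀ n, IsCompact (Kn n)) (hKnconv : ∀ n, Convex ℝ (Kn n))
    (hKn0 : ∀ n, (0 : X) ∈ interior (Kn n))
    (hH : Tendsto (fun n => Metric.hausdorffDist (Kn n) K) atTop (𝓝 0))
    (xn : ℕ → X)
    (x : X) (hx : x ∈ frontier K) (hxconv : Tendsto xn atTop (𝓝 x))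
    (yn : ℕ → X)
    (hyn : ∀ n, BirkhoffOrth (gauge (Kn n)) (xn n) (yn n) ∧ ω (xn n) (yn n) = 1)
    (y : X) (hy : BirkhoffOrth (gauge K) x y ∧ ω x y = 1) :
    Tendsto yn atTop (𝓝 y) := by
  have : FiniteDimensional ℝ X := .of_finrank_pos (by omega)
  have hω : Continuous fun p : X × X => ω p.1 p.2 := ω.toContinuousBilinearMap.continuous₂
  refine tendsto_of_subseq_tendsto fun ns hns => ?_
  set s : ℕ → ℝ := fun k => (1 + ‖yn (ns k)‖)⁻¹
  set w : ℕ → X := fun k => s k • yn (ns k)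
  have hsw : ∀ k, ‖w k‖ + s k = 1 := fun k => norm_inv_one_add_norm_smul_add_inv _
  have hωw : ∀ k, ω (xn (ns k)) (w k) = s k := fun k => by simp [w, (hyn _).2]
  obtain ⟨w₀, -, ms, hms, hw₀⟩ := (isCompact_closedBall (0 : X) 1).tendsto_subseq
    (x := w) fun k => by simpa using (le_add_of_nonneg_right (by positivity)).trans (hsw k).le
  have hσ : Tendsto (ns ∘ ms) atTop atTop := hns.comp hms.tendsto_atTop
  have hxσ : Tendsto (xn ∘ ns ∘ ms) atTop (𝓝 x) := hxconv.comp hσ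
  have hs : Tendsto (s ∘ ms) atTop (𝓝 (ω x w₀)) :=
    ((hω.tendsto (x, w₀)).comp (hxσ.prodMk_nhds hw₀)).congr fun k => hωw (ms k)
  have hnorm : ‖w₀‖ + ω x w₀ = 1 := tendsto_nhds_unique
    ((hw₀.norm.add hs).congr fun k => hsw (ms k)) tendsto_const_nhds
  have horth : BirkhoffOrth (gauge K) x w₀ :=
    BirkhoffOrth.of_tendsto (fun z z₀ hz => tendsto_gauge_of_tendsto_hausdorffDist hKc hKconv
        hK0 (fun _ => hKnc _) (fun _ => hKnconv _) (fun _ => ⟨0, interior_subset (hKn0 _)⟩)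
        (hH.comp hσ) hz)
      hxσ hw₀ fun k => (hyn _).1.smul_right _
  have hs₀ : ω x w₀ ≠ 0 := apply_ne_zero_of_birkhoffOrth hdim ω halt hnd hKconv hK0 hx horth
    (by rintro rfl; simp at hnorm)
  have hy₀ : y = (ω x w₀)⁻¹ • w₀ := hKsm.eq_of_birkhoffOrth ω hKconv hK0 hx hy.1 hy.2
    (horth.smul_right _) (by simp [hs₀])
  refine ⟨ms, hy₀ ▸ ((hs.inv₀ hs₀).smul hw₀).congr fun k => ?_⟩
  simp [w, s, smul_smul, mul_inv_cancel₀ (by positivity : 1 + ‖yn (ns (ms k))‖ ≠ 0)]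

/-- Right continuity of orthogonality: if `Kₙ → K` in the Hausdorff metric,
`xₙ ∈ ∂Kₙ` with `xₙ → x ∈ ∂K`, `xₙ ⊣ₙ yₙ` with `ω(xₙ,yₙ) = 1`, and `x ⊣ y`
with `ω(x,y) = 1`, then `yₙ → y`. -/
theorem stmt_19
    {X : Type*} [NormedAddCommGroup X] [NormedSpace ℝ X]
    (hdim : Module.finrank ℝ X = 2)
    (ω : X →ₗ[ℝ] X →ₗ[ℝ] ℝ)
    (halt : ∀ x, ω x x = 0) (hnd : ∀ x, (∀ y, ω x y = 0) → x = 0)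
    (K : Set X) (hKc : IsCompact K) (hKconv : Convex ℝ K)
    (hK0 : (0 : X) ∈ interior K) (hKsm : SmoothBody K)
    (Kn : ℕ → Set X)
    (hKnc : ∀ n, IsCompact (Kn n)) (hKnconv : ∀ n, Convex ℝ (Kn n))
    (hKn0 : ∀ n, (0 : X) ∈ interior (Kn n)) (hKnsm : ∀ n, SmoothBody (Kn n))
    (hH : Tendsto (fun n => Metric.hausdorffDist (Kn n) K) atTop (𝓝 0))
    (xn : ℕ → X) (hxn : ∀ n, xn n ∈ frontier (Kn n))
    (x : X) (hx : x ∈ frontier K) (hxconv : Tendsto xn atTop (𝓝 x))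
    (yn : ℕ → X)
    (hyn : ∀ n, BirkhoffOrth (gauge (Kn n)) (xn n) (yn n) ∧ ω (xn n) (yn n) = 1)
    (y : X) (hy : BirkhoffOrth (gauge K) x y ∧ ω x y = 1) :
    Tendsto yn atTop (𝓝 y) :=
  stmt_19_general hdim ω halt hnd K hKc hKconv hK0 hKsm Kn hKnc hKnconv hKn0 hH xn x hx hxconv yn
    hyn y hy
end
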